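/- arXiv:2103.11572 — 3 statements merged into one kernel-verified Lean document; each statement's English description precedes it below -/
import Mathlib

section
/- Let d ≥ 2 be an integer, A a real n×n matrix, B a real n×m matrix, K, L real m×n matrices, Q₁, Q₂ symmetric real n×n matrices, R a symmetric real m×m matrix, and P₁, P₂ symmetric real n×n matrices. Define the Kronecker-structured matrices Ã = I_d ⊗ A, B̃ = I_d ⊗ B, K̃ = I_d ⊗ (K − L) + J_d ⊗ L, 𝐐 = I_d ⊗ (Q₁ + d·Q₂) − J_d ⊗ Q₂, 𝐑 = I_d ⊗ R, and P̃ = I_d ⊗ (P₁ − P₂) + J_d ⊗ P₂. If P̃ = (Ã + B̃K̃)ᵀ P̃ (Ã + B̃K̃) + 𝐐 + K̃ᵀ𝐑K̃, then ΔP := P₁ − P₂ satisfies ΔP = (A + B·ΔK)ᵀ ΔP (A + B·ΔK) + (Q₁ + d·Q₂) + ΔKᵀ R ΔK, where ΔK := K − L. -/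
/-! The block structure `I_d ⊗ X + J_d ⊗ Y` acts on columns `u ⊗ Z` with `J_d u = 0` through
`X` alone: `(I_d ⊗ X + J_d ⊗ Y) (u ⊗ Z) = u ⊗ (X Z)`, and transposition preserves the structure.
Taking `u = e₀ - e₁` and multiplying the Lyapunov equation on the right by
`u ⊗ I_n` therefore turns it into `u ⊗ ΔP = u ⊗ (…)`, where `…` is the reduced Lyapunov expression;
since `u ≠ 0`, the two `n × n` factors agree. -/

open Matrix
open scoped Kronecker

def allOnes (d : ℕ) : Matrix (Fin d) (Fin d) ℝ := Matrix.of fun _ _ => 1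

def diffCol {d : ℕ} (i j : Fin d) : Matrix (Fin d) (Fin 1) ℝ :=
  replicateCol (Fin 1) (Pi.single i 1 - Pi.single j 1)

lemma allOnes_transpose (d : ℕ) : (allOnes d)ᵀ = allOnes d := rfl

lemma allOnes_mul_diffCol {d : ℕ} (i j : Fin d) : allOnes d * diffCol i j = 0 := by
  ext k l
  simp [allOnes, diffCol, mul_apply, Finset.sum_sub_distrib]

lemma diffCol_kronecker_injective {d p q : ℕ} {i j : Fin d} (hij : i ≠ j) :
    Function.Injective (diffCol i j ⊗ₖ · : Matrix (Fin p) (Fin q) ℝ → _) := by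
  intro X Y h
  ext a b
  simpa [diffCol, hij] using congrFun (congrFun h (i, a)) (0, b)

section KroneckerColumn

variable {d k p q r : ℕ} (X Y : Matrix (Fin p) (Fin q) ℝ) (Z : Matrix (Fin q) (Fin r) ℝ)

lemma one_kronecker_mul_kronecker (v : Matrix (Fin d) (Fin k) ℝ) :
    ((1 : Matrix (Fin d) (Fin d) ℝ) ⊗ₖ X) * (v ⊗ₖ Z) = v ⊗ₖ (X * Z) := by
  rw [← mul_kronecker_mul, Matrix.one_mul]

lemma allOnes_kronecker_mul_kronecker {v : Matrix (Fin d) (Fin k) ℝ} (hv : allOnes d * v = 0) :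
    (allOnes d ⊗ₖ Y) * (v ⊗ₖ Z) = 0 := by
  rw [← mul_kronecker_mul, hv, zero_kronecker]

end KroneckerColumn

theorem stmt_10_general {n m : ℕ} (d : ℕ) (hd : 2 ≤ d)
    (A : Matrix (Fin n) (Fin n) ℝ) (B : Matrix (Fin n) (Fin m) ℝ)
    (K L : Matrix (Fin m) (Fin n) ℝ)
    (Q₁ Q₂ : Matrix (Fin n) (Fin n) ℝ)
    (R : Matrix (Fin m) (Fin m) ℝ)
    (P₁ P₂ : Matrix (Fin n) (Fin n) ℝ)
    (hLyap :
      (1 : Matrix (Fin d) (Fin d) ℝ) ⊗ₖ (P₁ - P₂) + allOnes d ⊗ₖ P₂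
      = ((1 : Matrix (Fin d) (Fin d) ℝ) ⊗ₖ A
          + ((1 : Matrix (Fin d) (Fin d) ℝ) ⊗ₖ B)
            * ((1 : Matrix (Fin d) (Fin d) ℝ) ⊗ₖ (K - L) + allOnes d ⊗ₖ L))ᵀ
        * ((1 : Matrix (Fin d) (Fin d) ℝ) ⊗ₖ (P₁ - P₂) + allOnes d ⊗ₖ P₂)
        * ((1 : Matrix (Fin d) (Fin d) ℝ) ⊗ₖ A
          + ((1 : Matrix (Fin d) (Fin d) ℝ) ⊗ₖ B)
            * ((1 : Matrix (Fin d) (Fin d) ℝ) ⊗ₖ (K - L) + allOnes d ⊗ₖ L))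
        + ((1 : Matrix (Fin d) (Fin d) ℝ) ⊗ₖ (Q₁ + (d : ℝ) • Q₂) - allOnes d ⊗ₖ Q₂)
        + ((1 : Matrix (Fin d) (Fin d) ℝ) ⊗ₖ (K - L) + allOnes d ⊗ₖ L)ᵀ
          * ((1 : Matrix (Fin d) (Fin d) ℝ) ⊗ₖ R)
          * ((1 : Matrix (Fin d) (Fin d) ℝ) ⊗ₖ (K - L) + allOnes d ⊗ₖ L)) :
    P₁ - P₂ = (A + B * (K - L))ᵀ * (P₁ - P₂) * (A + B * (K - L))
      + (Q₁ + (d : ℝ) • Q₂) + (K - L)ᵀ * R * (K - L) := by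
  let i : Fin d := ⟨0, by omega⟩
  let j : Fin d := ⟨1, by omega⟩
  have hv := allOnes_mul_diffCol i j
  have h := congrArg (· * (diffCol i j ⊗ₖ (1 : Matrix (Fin n) (Fin n) ℝ))) hLyap
  simp only [transpose_add, transpose_mul, ← kroneckerMap_transpose, transpose_one,
    allOnes_transpose, Matrix.add_mul, Matrix.sub_mul, Matrix.mul_add, Matrix.mul_assoc,
    one_kronecker_mul_kronecker, allOnes_kronecker_mul_kronecker _ _ hv, Matrix.mul_zero,
    add_zero, sub_zero, Matrix.mul_one, ← kronecker_add] at h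
  refine (diffCol_kronecker_injective (by simp [i, j, Fin.ext_iff]) h).trans ?_
  simp only [transpose_add, transpose_mul, Matrix.add_mul, Matrix.sub_mul, Matrix.mul_add,
    Matrix.mul_assoc]

theorem stmt_10 {n m : ℕ} (d : ℕ) (hd : 2 ≤ d)
    (A : Matrix (Fin n) (Fin n) ℝ) (B : Matrix (Fin n) (Fin m) ℝ)
    (K L : Matrix (Fin m) (Fin n) ℝ)
    (Q₁ Q₂ : Matrix (Fin n) (Fin n) ℝ) (hQ₁ : Q₁.IsSymm) (hQ₂ : Q₂.IsSymm)
    (R : Matrix (Fin m) (Fin m) ℝ) (hR : R.IsSymm)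
    (P₁ P₂ : Matrix (Fin n) (Fin n) ℝ) (hP₁ : P₁.IsSymm) (hP₂ : P₂.IsSymm)
    (hLyap :
      (1 : Matrix (Fin d) (Fin d) ℝ) ⊗ₖ (P₁ - P₂) + allOnes d ⊗ₖ P₂
      = ((1 : Matrix (Fin d) (Fin d) ℝ) ⊗ₖ A
          + ((1 : Matrix (Fin d) (Fin d) ℝ) ⊗ₖ B)
            * ((1 : Matrix (Fin d) (Fin d) ℝ) ⊗ₖ (K - L) + allOnes d ⊗ₖ L))ᵀ
        * ((1 : Matrix (Fin d) (Fin d) ℝ) ⊗ₖ (P₁ - P₂) + allOnes d ⊗ₖ P₂)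
        * ((1 : Matrix (Fin d) (Fin d) ℝ) ⊗ₖ A
          + ((1 : Matrix (Fin d) (Fin d) ℝ) ⊗ₖ B)
            * ((1 : Matrix (Fin d) (Fin d) ℝ) ⊗ₖ (K - L) + allOnes d ⊗ₖ L))
        + ((1 : Matrix (Fin d) (Fin d) ℝ) ⊗ₖ (Q₁ + (d : ℝ) • Q₂) - allOnes d ⊗ₖ Q₂)
        + ((1 : Matrix (Fin d) (Fin d) ℝ) ⊗ₖ (K - L) + allOnes d ⊗ₖ L)ᵀ
          * ((1 : Matrix (Fin d) (Fin d) ℝ) ⊗ₖ R)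
          * ((1 : Matrix (Fin d) (Fin d) ℝ) ⊗ₖ (K - L) + allOnes d ⊗ₖ L)) :
    P₁ - P₂ = (A + B * (K - L))ᵀ * (P₁ - P₂) * (A + B * (K - L))
      + (Q₁ + (d : ℝ) • Q₂) + (K - L)ᵀ * R * (K - L) :=
  stmt_10_general d hd A B K L Q₁ Q₂ R P₁ P₂ hLyap
end

section
/- Let d ≥ 2 be an integer, A a real n×n matrix, B a real n×m matrix, and K, L real m×n matrices. Define Ã = I_d ⊗ A, B̃ = I_d ⊗ B, and K̃ = I_d ⊗ (K − L) + J_d ⊗ L. If Ã + B̃K̃ is Schur stable, then A + B(K − L) is Schur stable. -/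
open Matrix
open scoped Kronecker

/-- A real square matrix is Schur stable if all of its complex eigenvalues have
modulus strictly less than one. -/
def SchurStable {N : Type*} [Fintype N] [DecidableEq N] (M : Matrix N N ℝ) : Prop :=
  ∀ μ ∈ spectrum ℂ (M.map (algebraMap ℝ ℂ)), ‖μ‖ < 1

/-!
The closed-loop matrix factors as `I_d ⊗ (A + B(K - L)) + J_d ⊗ BL`. If `(A + B(K - L)) v = μ v`
with `v ≠ 0` and `x ≠ 0` lies in the kernel of `J_d` (which is nontrivial for `d ≥ 2`), then
`x ⊗ v` is an eigenvector of the closed-loop matrix for the same `μ`. Hence every eigenvalue of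
`A + B(K - L)` is one of the big matrix, and Schur stability passes down.
-/

namespace Matrix

variable {ι n K : Type*} [Fintype ι] [Fintype n] [DecidableEq ι] [DecidableEq n]

theorem mem_spectrum_iff_exists_mulVec_eq_smul [Field K] (A : Matrix n n K) (μ : K) :
    μ ∈ spectrum K A ↔ ∃ v ≠ 0, A *ᵥ v = μ • v := by
  rw [← spectrum_toLin', ← Module.End.hasEigenvalue_iff_mem_spectrum,
    Module.End.hasEigenvalue_iff, Submodule.ne_bot_iff]
  simp only [Module.End.mem_eigenspace_iff, toLin'_apply, and_comm]

theorem map_kronecker {l m p q α β F : Type*} [Mul α] [Mul β] [FunLike F α β] [MulHomClass F α β]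
    (f : F) (A : Matrix l m α) (B : Matrix p q α) :
    (A ⊗ₖ B).map f = A.map f ⊗ₖ B.map f := by
  ext
  simp

theorem kronecker_mulVec_vec_vecMulVec {l m p q R : Type*} [Fintype m] [Fintype q]
    [CommSemiring R] (P : Matrix l m R) (S : Matrix p q R) (x : m → R) (v : q → R) :
    (P ⊗ₖ S) *ᵥ vec (vecMulVec v x) = vec (vecMulVec (S *ᵥ v) (P *ᵥ x)) := by
  rw [kronecker_mulVec_vec, mul_vecMulVec, vecMulVec_mul, vecMul_transpose]

theorem exists_ne_zero_const_one_mulVec_eq_zero {R : Type*} [Ring R] [Nontrivial R]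
    (h : 1 < Fintype.card ι) :
    ∃ x : ι → R, x ≠ 0 ∧ (of fun _ _ => (1 : R) : Matrix ι ι R) *ᵥ x = 0 := by
  obtain ⟨i, j, hij⟩ := Fintype.exists_pair_of_one_lt_card h
  refine ⟨Pi.single i 1 - Pi.single j 1, fun h0 => ?_, ?_⟩
  · simpa [hij] using congrFun h0 i
  · ext
    simp [mulVec, dotProduct, Finset.sum_sub_distrib]

theorem spectrum_subset_spectrum_one_kronecker_add_kronecker [Field K] (S T : Matrix n n K)
    (P : Matrix ι ι K) {x : ι → K} (hx : x ≠ 0) (hPx : P *ᵥ x = 0) :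
    spectrum K S ⊆ spectrum K ((1 : Matrix ι ι K) ⊗ₖ S + P ⊗ₖ T) := by
  intro μ hμ
  obtain ⟨v, hv, hSv⟩ := (mem_spectrum_iff_exists_mulVec_eq_smul S μ).1 hμ
  refine (mem_spectrum_iff_exists_mulVec_eq_smul _ μ).2 ⟨vec (vecMulVec v x), ?_, ?_⟩
  · obtain ⟨i, hi⟩ := Function.ne_iff.mp hv
    obtain ⟨j, hj⟩ := Function.ne_iff.mp hx
    rw [Ne, vec_eq_zero_iff]
    exact fun h => mul_ne_zero hi hj (congrFun₂ h i j)
  · rw [add_mulVec, kronecker_mulVec_vec_vecMulVec, kronecker_mulVec_vec_vecMulVec, hSv, hPx,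
      one_mulVec]
    ext
    simp [vecMulVec_apply]

end Matrix

theorem stmt_11 {n m : ℕ} (d : ℕ) (hd : 2 ≤ d)
    (A : Matrix (Fin n) (Fin n) ℝ) (B : Matrix (Fin n) (Fin m) ℝ)
    (K L : Matrix (Fin m) (Fin n) ℝ)
    (hstab : SchurStable
      ((1 : Matrix (Fin d) (Fin d) ℝ) ⊗ₖ A
        + ((1 : Matrix (Fin d) (Fin d) ℝ) ⊗ₖ B)
          * ((1 : Matrix (Fin d) (Fin d) ℝ) ⊗ₖ (K - L) + allOnes d ⊗ₖ L))) :
    SchurStable (A + B * (K - L)) := by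
  have hsplit : (1 : Matrix (Fin d) (Fin d) ℝ) ⊗ₖ A
        + ((1 : Matrix (Fin d) (Fin d) ℝ) ⊗ₖ B)
          * ((1 : Matrix (Fin d) (Fin d) ℝ) ⊗ₖ (K - L) + allOnes d ⊗ₖ L)
      = (1 : Matrix (Fin d) (Fin d) ℝ) ⊗ₖ (A + B * (K - L)) + allOnes d ⊗ₖ (B * L) := by
    rw [Matrix.mul_add, ← mul_kronecker_mul, ← mul_kronecker_mul, ← add_assoc, Matrix.one_mul,
      Matrix.one_mul, ← kronecker_add]
  obtain ⟨x, hx, hJx⟩ := exists_ne_zero_const_one_mulVec_eq_zero (R := ℂ)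
    (ι := Fin d) (by rw [Fintype.card_fin]; omega)
  have hJ : (allOnes d).map (algebraMap ℝ ℂ) = of fun _ _ => 1 := by
    ext
    simp [allOnes]
  intro μ hμ
  apply hstab μ
  rw [hsplit, Matrix.map_add _ (map_add _), map_kronecker, map_kronecker, hJ,
    Matrix.map_one _ (map_zero _) (map_one _)]
  exact spectrum_subset_spectrum_one_kronecker_add_kronecker _ _ _ hx hJx hμ
end

section
/- Let d ≥ 2 be an integer, A a real n×n matrix, B a real n×m matrix, R a symmetric positive definite real m×m matrix, and P₁, P₂ symmetric real n×n matrices such that P̃ = I_d ⊗ (P₁ − P₂) + J_d ⊗ P₂ is positive semidefinite. Define Y₁ = R + Bᵀ P₁ B, Y₂ = Bᵀ P₂ B, Z₁ = Bᵀ P₁ A, Z₂ = Bᵀ P₂ A, and the structured matrices H̃₂₂ = I_d ⊗ (Y₁ − Y₂) + J_d ⊗ Y₂ and H̃₂₁ = I_d ⊗ (Z₁ − Z₂) + J_d ⊗ Z₂. Then H̃₂₂ is positive definite (in particular Y₁ − Y₂, Y₁ + (d−2)·Y₂, Y₁ + (d−1)·Y₂, and Y₁ − (d−1)·Y₂(Y₁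 + (d−2)·Y₂)⁻¹Y₂ are all invertible), and setting F = (Y₁ − (d−1)·Y₂(Y₁ + (d−2)·Y₂)⁻¹Y₂)⁻¹ and G = (Y₁ + (d−1)·Y₂)⁻¹Y₂(Y₁ − Y₂)⁻¹, one has −H̃₂₂⁻¹ H̃₂₁ = I_d ⊗ (K − L) + J_d ⊗ L with K = −F·Z₁ + (d−1)·G·Z₂ and L = −F·Z₂ + G·Z₁ + (d−2)·G·Z₂. -/
/-!
Matrices `I_d ⊗ D + J_d ⊗ Y` multiply blockwise on their two "eigen-parts" `D` and `D + d • Y`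
(the actions on `𝟙^⊥ ⊗ ℝ^m` and on `𝟙 ⊗ ℝ^m`), because `J_d * J_d = d • J_d`.

Compressing `P̃` with `c ⊗ I` gives `(c ⬝ c) • (P₁ - P₂) + (∑ c)² • P₂ ⪰ 0`; the choices
`c = e₀ - e₁` and `c = 𝟙_{<k}` show `P₁ - P₂ ⪰ 0` and `P₁ + (k - 1) • P₂ ⪰ 0` for `1 ≤ k ≤ d`.
Adding `R ≻ 0` makes `Y₁ - Y₂`, `Y₁ + (d - 1) • Y₂`, `W = Y₁ + (d - 2) • Y₂` and
`H̃₂₂ = I ⊗ R + (I ⊗ B)ᵀ P̃ (I ⊗ B)` positive definite.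

The Schur complement factors as `(Y₁ - Y₂) W⁻¹ (Y₁ + (d - 1) • Y₂)`, so
`F = (Y₁ + (d - 1) • Y₂)⁻¹ W (Y₁ - Y₂)⁻¹`, and since `W + Y₂ = Y₁ + (d - 1) • Y₂` and
`W - (d - 1) • Y₂ = Y₁ - Y₂` this gives `F + G = (Y₁ - Y₂)⁻¹` and
`F - (d - 1) • G = (Y₁ + (d - 1) • Y₂)⁻¹`. These are the eigen-parts of `H̃₂₂⁻¹`, and `K - L`,
`K + (d - 1) • L` are those of `-H̃₂₂⁻¹ H̃₂₁`.
-/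

open Matrix
open scoped Kronecker

lemma allOnes_mul_allOnes (d : ℕ) : allOnes d * allOnes d = (d : ℝ) • allOnes d := by
  ext i j
  simp [allOnes, Matrix.mul_apply]

lemma dotProduct_allOnes_mulVec {d : ℕ} (c : Fin d → ℝ) :
    c ⬝ᵥ allOnes d *ᵥ c = (∑ i, c i) ^ 2 := by
  simp [allOnes, dotProduct, mulVec, ← Finset.sum_mul, sq]

namespace Matrix

variable {ι κ : Type*} [Fintype ι] [Fintype κ] [DecidableEq κ]

/-- The matrix `c ⊗ I`, with the vector `c` read as a column. -/
def colKronOne (κ : Type*) [DecidableEq κ] (c : ι → ℝ) : Matrix (ι × κ) κ ℝ :=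
  of fun p l => if p.2 = l then c p.1 else 0

lemma colKronOne_transpose_mul_kronecker_mul (c : ι → ℝ) (A : Matrix ι ι ℝ)
    (B : Matrix κ κ ℝ) :
    (colKronOne κ c)ᵀ * (A ⊗ₖ B) * colKronOne κ c = (c ⬝ᵥ A *ᵥ c) • B := by
  ext k l
  simp only [colKronOne, mul_apply, transpose_apply, of_apply, kroneckerMap_apply, ite_mul,
    zero_mul, Fintype.sum_prod_type, Finset.sum_ite_eq', Finset.mem_univ, ↓reduceIte, mul_ite,
    Finset.sum_mul, mul_zero, dotProduct, mulVec, Finset.mul_sum, smul_apply, smul_eq_mul]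
  rw [Finset.sum_comm]
  exact Finset.sum_congr rfl fun _ _ => Finset.sum_congr rfl fun _ _ => by ring

end Matrix

def kronIJ {κ μ : Type*} (d : ℕ) (D Y : Matrix κ μ ℝ) : Matrix (Fin d × κ) (Fin d × μ) ℝ :=
  1 ⊗ₖ D + allOnes d ⊗ₖ Y

namespace kronIJ

variable {κ μ ν : Type*} {d : ℕ}

lemma add_left (R D Y : Matrix κ μ ℝ) : kronIJ d (R + D) Y = 1 ⊗ₖ R + kronIJ d D Y := by
  rw [kronIJ, kronIJ, kronecker_add, add_assoc]

lemma neg (D Y : Matrix κ μ ℝ) : kronIJ d (-D) (-Y) = -kronIJ d D Y := by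
  ext
  simp only [kronIJ, Matrix.add_apply, kroneckerMap_apply, Matrix.neg_apply]
  ring

lemma transpose_mul_mul [Fintype κ] (B : Matrix κ μ ℝ) (D Y : Matrix κ κ ℝ) :
    ((1 : Matrix (Fin d) (Fin d) ℝ) ⊗ₖ B)ᵀ * kronIJ d D Y * ((1 : Matrix (Fin d) (Fin d) ℝ) ⊗ₖ B) =
      kronIJ d (Bᵀ * D * B) (Bᵀ * Y * B) := by
  rw [kronIJ, kronIJ, ← kroneckerMap_transpose, transpose_one, Matrix.mul_add, Matrix.add_mul]
  simp only [← mul_kronecker_mul, Matrix.one_mul, Matrix.mul_one]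

variable [Fintype μ]

lemma mul (D Y : Matrix κ μ ℝ) (D' Y' : Matrix μ ν ℝ) :
    kronIJ d D Y * kronIJ d D' Y' =
      kronIJ d (D * D') (D * Y' + Y * D' + (d : ℝ) • (Y * Y')) := by
  simp only [kronIJ, Matrix.add_mul, Matrix.mul_add, ← mul_kronecker_mul, Matrix.one_mul,
    Matrix.mul_one, allOnes_mul_allOnes, smul_kronecker, kronecker_add, kronecker_smul]
  abel

lemma mul_eq_of (hd : d ≠ 0) {D Y : Matrix κ μ ℝ} {D' Y' : Matrix μ ν ℝ}
    {D'' Y'' : Matrix κ ν ℝ} (h₁ : D * D' = D'')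
    (h₂ : (D + (d : ℝ) • Y) * (D' + (d : ℝ) • Y') = D'' + (d : ℝ) • Y'') :
    kronIJ d D Y * kronIJ d D' Y' = kronIJ d D'' Y'' := by
  rw [mul, h₁]
  congr 1
  refine smul_right_injective _ (Nat.cast_ne_zero.mpr hd : (d : ℝ) ≠ 0) ?_
  rw [← add_right_inj D'', ← h₂, ← h₁]
  simp only [Matrix.add_mul, Matrix.mul_add, Matrix.smul_mul, Matrix.mul_smul]
  module

end kronIJ

namespace Matrix.PosSemidef

variable {κ : Type*} [Fintype κ] [DecidableEq κ] {d : ℕ} {D Y : Matrix κ κ ℝ}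

lemma smul_add_smul_of_kronIJ (h : (kronIJ d D Y).PosSemidef) (c : Fin d → ℝ) :
    ((c ⬝ᵥ c) • D + (∑ i, c i) ^ 2 • Y).PosSemidef := by
  have := h.conjTranspose_mul_mul_same (colKronOne κ c)
  rwa [conjTranspose_eq_transpose_of_trivial, kronIJ, Matrix.mul_add, Matrix.add_mul,
    colKronOne_transpose_mul_kronecker_mul, colKronOne_transpose_mul_kronecker_mul, one_mulVec,
    dotProduct_allOnes_mulVec] at this

lemma of_kronIJ (hd : 2 ≤ d) (h : (kronIJ d D Y).PosSemidef) : D.PosSemidef := by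
  have h01 : (⟨0, by omega⟩ : Fin d) ≠ ⟨1, by omega⟩ := by simp
  set c : Fin d → ℝ := Pi.single ⟨0, by omega⟩ 1 - Pi.single ⟨1, by omega⟩ 1
  have hcc : c ⬝ᵥ c = 2 := by simp [c, dotProduct_sub, h01, h01.symm, one_add_one_eq_two]
  have hsum : ∑ i, c i = 0 := by simp [c, Finset.sum_sub_distrib]
  have := h.smul_add_smul_of_kronIJ c
  rw [hcc, hsum] at this
  simpa [smul_smul] using this.smul (a := (2 : ℝ)⁻¹) (by norm_num)

lemma add_smul_of_kronIJ {k : ℕ} (hk₀ : 0 < k) (hk : k ≤ d) (h : (kronIJ d D Y).PosSemidef) :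
    (D + (k : ℝ) • Y).PosSemidef := by
  set c : Fin d → ℝ := fun i => if (i : ℕ) < k then 1 else 0
  have hcc : c ⬝ᵥ c = k := by
    simp [c, dotProduct, ← ite_and, Finset.sum_boole, Fin.card_filter_val_lt, hk]
  have hsum : ∑ i, c i = k := by simp [c, Finset.sum_boole, Fin.card_filter_val_lt, hk]
  have := h.smul_add_smul_of_kronIJ c
  rw [hcc, hsum] at this
  have hk' : (k : ℝ) ≠ 0 := by positivity
  convert this.smul (a := (k : ℝ)⁻¹) (by positivity) using 1
  match_scalars <;> field_simp

end Matrix.PosSemidef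

lemma Matrix.PosDef.add_transpose_mul_mul {κ μ : Type*} [Fintype κ] [Fintype μ]
    {R : Matrix μ μ ℝ} {P : Matrix κ κ ℝ} (hR : R.PosDef) (hP : P.PosSemidef)
    (B : Matrix κ μ ℝ) : (R + Bᵀ * P * B).PosDef := by
  simpa [conjTranspose_eq_transpose_of_trivial] using
    hR.add_posSemidef (hP.conjTranspose_mul_mul_same B)

namespace Matrix

variable {K : Type*} [CommRing K] {m : Type*} [Fintype m] [DecidableEq m]
  {Y₁ Y₂ F G : Matrix m m K} {a b : K}

lemma sub_smul_mul_inv_mul_eq (hab : a = b + 1) (hW : IsUnit (Y₁ + b • Y₂).det) :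
    Y₁ - a • (Y₂ * (Y₁ + b • Y₂)⁻¹ * Y₂) = (Y₁ - Y₂) * (Y₁ + b • Y₂)⁻¹ * (Y₁ + a • Y₂) := by
  set W := Y₁ + b • Y₂ with hWdef
  have hS : Y₁ - Y₂ = W - a • Y₂ := by rw [hWdef, hab]; module
  have hT : Y₁ + a • Y₂ = W + Y₂ := by rw [hWdef, hab]; module
  rw [hS, hT]
  simp only [Matrix.sub_mul, Matrix.mul_add, Matrix.smul_mul, Matrix.mul_assoc,
    nonsing_inv_mul _ hW, Matrix.mul_one]
  simp only [← Matrix.mul_assoc, mul_nonsing_inv _ hW, Matrix.one_mul]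
  rw [hWdef, hab]
  module

lemma isUnit_det_sub_smul_mul_inv_mul (hab : a = b + 1) (hS : IsUnit (Y₁ - Y₂).det)
    (hT : IsUnit (Y₁ + a • Y₂).det) (hW : IsUnit (Y₁ + b • Y₂).det) :
    IsUnit (Y₁ - a • (Y₂ * (Y₁ + b • Y₂)⁻¹ * Y₂)).det := by
  rw [sub_smul_mul_inv_mul_eq hab hW, det_mul, det_mul]
  exact (hS.mul (isUnit_nonsing_inv_det _ hW)).mul hT

lemma inv_sub_smul_mul_inv_mul_eq (hab : a = b + 1) (hW : IsUnit (Y₁ + b • Y₂).det) :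
    (Y₁ - a • (Y₂ * (Y₁ + b • Y₂)⁻¹ * Y₂))⁻¹ =
      (Y₁ + a • Y₂)⁻¹ * (Y₁ + b • Y₂) * (Y₁ - Y₂)⁻¹ := by
  rw [sub_smul_mul_inv_mul_eq hab hW, Matrix.mul_inv_rev, Matrix.mul_inv_rev,
    nonsing_inv_nonsing_inv _ hW, Matrix.mul_assoc]

lemma add_eq_inv_of_schur (hab : a = b + 1) (hW : IsUnit (Y₁ + b • Y₂).det)
    (hT : IsUnit (Y₁ + a • Y₂).det) (hF : F = (Y₁ - a • (Y₂ * (Y₁ + b • Y₂)⁻¹ * Y₂))⁻¹)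
    (hG : G = (Y₁ + a • Y₂)⁻¹ * Y₂ * (Y₁ - Y₂)⁻¹) : F + G = (Y₁ - Y₂)⁻¹ := by
  have hWT : Y₁ + b • Y₂ + Y₂ = Y₁ + a • Y₂ := by rw [hab]; module
  rw [hF, hG, inv_sub_smul_mul_inv_mul_eq hab hW, ← Matrix.add_mul, ← Matrix.mul_add, hWT,
    nonsing_inv_mul _ hT, Matrix.one_mul]

lemma sub_smul_eq_inv_of_schur (hab : a = b + 1) (hW : IsUnit (Y₁ + b • Y₂).det)
    (hS : IsUnit (Y₁ - Y₂).det) (hF : F = (Y₁ - a • (Y₂ * (Y₁ + b • Y₂)⁻¹ * Y₂))⁻¹)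
    (hG : G = (Y₁ + a • Y₂)⁻¹ * Y₂ * (Y₁ - Y₂)⁻¹) : F - a • G = (Y₁ + a • Y₂)⁻¹ := by
  have hWS : Y₁ + b • Y₂ - a • Y₂ = Y₁ - Y₂ := by rw [hab]; module
  rw [hF, hG, inv_sub_smul_mul_inv_mul_eq hab hW, ← Matrix.smul_mul, ← Matrix.mul_smul,
    ← Matrix.sub_mul, ← Matrix.mul_sub, hWS, Matrix.mul_assoc, mul_nonsing_inv _ hS,
    Matrix.mul_one]

end Matrix

lemma kronIJ.neg_inv_mul_eq {m n : Type*} [Fintype m] [DecidableEq m] {d : ℕ}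
    (hd : d ≠ 0) {Y₁ Y₂ F G : Matrix m m ℝ} {Z₁ Z₂ K L : Matrix m n ℝ}
    (hS : IsUnit (Y₁ - Y₂).det) (hT : IsUnit (Y₁ + ((d : ℝ) - 1) • Y₂).det)
    (hH : IsUnit (kronIJ d (Y₁ - Y₂) Y₂).det)
    (hFG : F + G = (Y₁ - Y₂)⁻¹) (hFG' : F - ((d : ℝ) - 1) • G = (Y₁ + ((d : ℝ) - 1) • Y₂)⁻¹)
    (hK : K = -(F * Z₁) + ((d : ℝ) - 1) • (G * Z₂))
    (hL : L = -(F * Z₂) + G * Z₁ + ((d : ℝ) - 2) • (G * Z₂)) :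
    -((kronIJ d (Y₁ - Y₂) Y₂)⁻¹ * kronIJ d (Z₁ - Z₂) Z₂) = kronIJ d (K - L) L := by
  have hKL : K - L = -((F + G) * (Z₁ - Z₂)) := by
    rw [hK, hL]
    simp only [Matrix.add_mul, Matrix.mul_sub]
    module
  have hKL' : K - L + (d : ℝ) • L = -((F - ((d : ℝ) - 1) • G) * (Z₁ + ((d : ℝ) - 1) • Z₂)) := by
    rw [hK, hL]
    simp only [Matrix.sub_mul, Matrix.mul_add, Matrix.smul_mul, Matrix.mul_smul]
    module
  have hTY : Y₁ - Y₂ + (d : ℝ) • Y₂ = Y₁ + ((d : ℝ) - 1) • Y₂ := by module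
  have hX : kronIJ d (Y₁ - Y₂) Y₂ * kronIJ d (K - L) L = kronIJ d (-(Z₁ - Z₂)) (-Z₂) := by
    refine kronIJ.mul_eq_of hd ?_ ?_
    · rw [hKL, hFG, Matrix.mul_neg, mul_nonsing_inv_cancel_left _ _ hS]
    · rw [hKL', hFG', hTY, Matrix.mul_neg, mul_nonsing_inv_cancel_left _ _ hT]
      module
  rw [← neg_neg (kronIJ d (Z₁ - Z₂) Z₂), ← kronIJ.neg, ← hX, Matrix.mul_neg, neg_neg,
    nonsing_inv_mul_cancel_left _ _ hH]

section LinearQuadratic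

variable {m n : Type*} [Fintype m] [Fintype n] {d : ℕ} {R Y₁ Y₂ : Matrix m m ℝ}
  {B : Matrix n m ℝ} {P₁ P₂ : Matrix n n ℝ}

lemma posDef_sub_of_kronIJ [DecidableEq n] (hd : 2 ≤ d) (hR : R.PosDef)
    (hP : (kronIJ d (P₁ - P₂) P₂).PosSemidef) (hY₁ : Y₁ = R + Bᵀ * P₁ * B)
    (hY₂ : Y₂ = Bᵀ * P₂ * B) : (Y₁ - Y₂).PosDef := by
  convert hR.add_transpose_mul_mul (hP.of_kronIJ hd) B using 1
  rw [hY₁, hY₂, Matrix.mul_sub, Matrix.sub_mul]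
  abel

lemma posDef_add_smul_of_kronIJ [DecidableEq n] {k : ℕ} {c : ℝ} (hk₀ : 0 < k) (hk : k ≤ d)
    (hc : (k : ℝ) = c + 1) (hR : R.PosDef) (hP : (kronIJ d (P₁ - P₂) P₂).PosSemidef)
    (hY₁ : Y₁ = R + Bᵀ * P₁ * B) (hY₂ : Y₂ = Bᵀ * P₂ * B) : (Y₁ + c • Y₂).PosDef := by
  convert hR.add_transpose_mul_mul (hP.add_smul_of_kronIJ hk₀ hk) B using 1
  rw [hY₁, hY₂, hc]
  simp only [Matrix.mul_add, Matrix.mul_sub, Matrix.add_mul, Matrix.sub_mul, Matrix.mul_smul,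
    Matrix.smul_mul]
  module

lemma posDef_kronIJ (hR : R.PosDef) (hP : (kronIJ d (P₁ - P₂) P₂).PosSemidef)
    (hY₁ : Y₁ = R + Bᵀ * P₁ * B) (hY₂ : Y₂ = Bᵀ * P₂ * B) :
    (kronIJ d (Y₁ - Y₂) Y₂).PosDef := by
  have hS : Y₁ - Y₂ = R + Bᵀ * (P₁ - P₂) * B := by
    rw [hY₁, hY₂, Matrix.mul_sub, Matrix.sub_mul]
    abel
  rw [hS, hY₂, kronIJ.add_left, ← kronIJ.transpose_mul_mul]
  exact (PosDef.one.kronecker hR).add_transpose_mul_mul hP _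

end LinearQuadratic

theorem stmt_18_general {n m : ℕ} (d : ℕ) (hd : 2 ≤ d)
    (B : Matrix (Fin n) (Fin m) ℝ)
    (R : Matrix (Fin m) (Fin m) ℝ) (hR : R.PosDef)
    (P₁ P₂ : Matrix (Fin n) (Fin n) ℝ)
    (hP : ((1 : Matrix (Fin d) (Fin d) ℝ) ⊗ₖ (P₁ - P₂) + allOnes d ⊗ₖ P₂).PosSemidef)
    (Y₁ Y₂ : Matrix (Fin m) (Fin m) ℝ) (Z₁ Z₂ : Matrix (Fin m) (Fin n) ℝ)
    (hY₁ : Y₁ = R + Bᵀ * P₁ * B) (hY₂ : Y₂ = Bᵀ * P₂ * B)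
    (H22 : Matrix (Fin d × Fin m) (Fin d × Fin m) ℝ)
    (H21 : Matrix (Fin d × Fin m) (Fin d × Fin n) ℝ)
    (hH22 : H22 = (1 : Matrix (Fin d) (Fin d) ℝ) ⊗ₖ (Y₁ - Y₂) + allOnes d ⊗ₖ Y₂)
    (hH21 : H21 = (1 : Matrix (Fin d) (Fin d) ℝ) ⊗ₖ (Z₁ - Z₂) + allOnes d ⊗ₖ Z₂)
    (F G : Matrix (Fin m) (Fin m) ℝ)
    (hF : F = (Y₁ - ((d : ℝ) - 1) • (Y₂ * (Y₁ + ((d : ℝ) - 2) • Y₂)⁻¹ * Y₂))⁻¹)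
    (hG : G = (Y₁ + ((d : ℝ) - 1) • Y₂)⁻¹ * Y₂ * (Y₁ - Y₂)⁻¹)
    (K L : Matrix (Fin m) (Fin n) ℝ)
    (hK : K = -(F * Z₁) + ((d : ℝ) - 1) • (G * Z₂))
    (hL : L = -(F * Z₂) + G * Z₁ + ((d : ℝ) - 2) • (G * Z₂)) :
    H22.PosDef
    ∧ IsUnit (Y₁ - Y₂).det
    ∧ IsUnit (Y₁ + ((d : ℝ) - 2) • Y₂).det
    ∧ IsUnit (Y₁ + ((d : ℝ) - 1) • Y₂).det
    ∧ IsUnit (Y₁ - ((d : ℝ) - 1) • (Y₂ * (Y₁ + ((d : ℝ) - 2) • Y₂)⁻¹ * Y₂)).det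
    ∧ -(H22⁻¹ * H21)
        = (1 : Matrix (Fin d) (Fin d) ℝ) ⊗ₖ (K - L) + allOnes d ⊗ₖ L := by
  have hH : H22.PosDef := hH22 ▸ posDef_kronIJ hR hP hY₁ hY₂
  have hS := (isUnit_iff_isUnit_det _).mp (posDef_sub_of_kronIJ hd hR hP hY₁ hY₂).isUnit
  have hT := (isUnit_iff_isUnit_det _).mp
    (posDef_add_smul_of_kronIJ (c := (d : ℝ) - 1) (by omega) le_rfl (by ring) hR hP hY₁ hY₂).isUnit
  have hW := (isUnit_iff_isUnit_det _).mp
    (posDef_add_smul_of_kronIJ (k := d - 1) (c := (d : ℝ) - 2) (by omega) (by omega)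
      (by rw [Nat.cast_sub (by omega)]; ring) hR hP hY₁ hY₂).isUnit
  have hab : (d : ℝ) - 1 = (d - 2) + 1 := by ring
  refine ⟨hH, hS, hW, hT, isUnit_det_sub_smul_mul_inv_mul hab hS hT hW, ?_⟩
  subst hH22 hH21
  exact kronIJ.neg_inv_mul_eq (by omega) hS hT ((isUnit_iff_isUnit_det _).mp hH.isUnit)
    (add_eq_inv_of_schur hab hW hT hF hG) (sub_smul_eq_inv_of_schur hab hW hS hF hG) hK hL

theorem stmt_18 {n m : ℕ} (d : ℕ) (hd : 2 ≤ d)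
    (A : Matrix (Fin n) (Fin n) ℝ) (B : Matrix (Fin n) (Fin m) ℝ)
    (R : Matrix (Fin m) (Fin m) ℝ) (hR : R.PosDef)
    (P₁ P₂ : Matrix (Fin n) (Fin n) ℝ) (hP₁ : P₁.IsSymm) (hP₂ : P₂.IsSymm)
    (hP : ((1 : Matrix (Fin d) (Fin d) ℝ) ⊗ₖ (P₁ - P₂) + allOnes d ⊗ₖ P₂).PosSemidef)
    (Y₁ Y₂ : Matrix (Fin m) (Fin m) ℝ) (Z₁ Z₂ : Matrix (Fin m) (Fin n) ℝ)
    (hY₁ : Y₁ = R + Bᵀ * P₁ * B) (hY₂ : Y₂ = Bᵀ * P₂ * B)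
    (hZ₁ : Z₁ = Bᵀ * P₁ * A) (hZ₂ : Z₂ = Bᵀ * P₂ * A)
    (H22 : Matrix (Fin d × Fin m) (Fin d × Fin m) ℝ)
    (H21 : Matrix (Fin d × Fin m) (Fin d × Fin n) ℝ)
    (hH22 : H22 = (1 : Matrix (Fin d) (Fin d) ℝ) ⊗ₖ (Y₁ - Y₂) + allOnes d ⊗ₖ Y₂)
    (hH21 : H21 = (1 : Matrix (Fin d) (Fin d) ℝ) ⊗ₖ (Z₁ - Z₂) + allOnes d ⊗ₖ Z₂)
    (F G : Matrix (Fin m) (Fin m) ℝ)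
    (hF : F = (Y₁ - ((d : ℝ) - 1) • (Y₂ * (Y₁ + ((d : ℝ) - 2) • Y₂)⁻¹ * Y₂))⁻¹)
    (hG : G = (Y₁ + ((d : ℝ) - 1) • Y₂)⁻¹ * Y₂ * (Y₁ - Y₂)⁻¹)
    (K L : Matrix (Fin m) (Fin n) ℝ)
    (hK : K = -(F * Z₁) + ((d : ℝ) - 1) • (G * Z₂))
    (hL : L = -(F * Z₂) + G * Z₁ + ((d : ℝ) - 2) • (G * Z₂)) :
    H22.PosDef
    ∧ IsUnit (Y₁ - Y₂).det
    ∧ IsUnit (Y₁ + ((d : ℝ) - 2) • Y₂).det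
    ∧ IsUnit (Y₁ + ((d : ℝ) - 1) • Y₂).det
    ∧ IsUnit (Y₁ - ((d : ℝ) - 1) • (Y₂ * (Y₁ + ((d : ℝ) - 2) • Y₂)⁻¹ * Y₂)).det
    ∧ -(H22⁻¹ * H21)
        = (1 : Matrix (Fin d) (Fin d) ℝ) ⊗ₖ (K - L) + allOnes d ⊗ₖ L :=
  stmt_18_general d hd B R hR P₁ P₂ hP Y₁ Y₂ Z₁ Z₂ hY₁ hY₂ H22 H21 hH22 hH21 F G hF hG K L hK hL
end
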